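/- arXiv:2003.10007 — 8 statements merged into one kernel-verified Lean document; each statement's English description precedes it below -/
import Mathlib

section
/- Let F be a field, let n ≥ 1, k ≥ 1 and g ≥ 1 be integers, and let α = (α_1, …, α_n) be an injective tuple of elements of F. Then the g-fold star-product of the Reed–Solomon code RS_k(α) with itself equals the Reed–Solomon code of dimension min(g(k−1)+1, n); that is, the linear span of {v_1 ⋆ ⋯ ⋆ v_g : v_i ∈ RS_k(α) for all i ∈ [g]} equals RS_{min(g(k−1)+1, n)}(α). -/
/-!
The `g`-fold star-product of a subspace of `Fin n → F` is its `g`-th power as a submodule of the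
algebra `Fin n → F`, and `RS_m(α)` is the image of the polynomials of degree `< m` under the
evaluation algebra map `F[X] → (Fin n → F)`. Images commute with powers, and the `g`-th power of
the polynomials of degree `≤ c` is the space of polynomials of degree `≤ g c`, since every monomial
of degree `≤ a + b` is a product of monomials of degrees `≤ a` and `≤ b`. The `min` with `n`
comes from Lagrange interpolation: for injective `α`, `RS_m(α)` is everything once `m ≥ n`.
-/

/-- The Reed–Solomon code `RS_m(α)` of length `n` over `F`: the set of evaluation
vectors `(φ(α_1), …, φ(α_n))` of polynomials `φ` of degree `< m`. -/
noncomputable def RScode (F : Type*) [Field F] {n : ℕ} (α : Fin n → F) (m : ℕ) :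
    Submodule F (Fin n → F) :=
  (Polynomial.degreeLT F m).map (LinearMap.pi fun i => Polynomial.leval (α i))

open Polynomial

theorem Submodule.pow_eq_span_setOf_prod {R A : Type*} [CommSemiring R] [CommSemiring A]
    [Algebra R A] (M : Submodule R A) (g : ℕ) :
    M ^ g = span R {a | ∃ w : Fin g → A, (∀ i, w i ∈ M) ∧ a = ∏ i, w i} := by
  rw [pow_eq_span_pow_set]
  congr 1
  ext a
  simp only [Set.mem_pow, List.prod_ofFn, Set.mem_ofPred_eq]
  constructor
  · rintro ⟨w, rfl⟩
    exact ⟨fun i => w i, fun i => (w i).2, rfl⟩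
  · rintro ⟨w, hw, rfl⟩
    exact ⟨fun i => ⟨w i, hw i⟩, rfl⟩

namespace Polynomial

variable {R : Type*} [CommSemiring R]

theorem degreeLE_zero_eq_one : degreeLE R 0 = 1 := by
  ext p
  rw [mem_degreeLE, Submodule.one_eq_range, LinearMap.mem_range]
  constructor
  · intro hp
    exact ⟨p.coeff 0, (eq_C_of_degree_le_zero hp).symm⟩
  · rintro ⟨a, rfl⟩
    exact degree_C_le

theorem degreeLE_mul_degreeLE (a b : ℕ) :
    degreeLE R a * degreeLE R b = degreeLE R ↑(a + b) := by
  classical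
  apply le_antisymm
  · refine Submodule.mul_le.2 fun p hp q hq => mem_degreeLE.2 ?_
    calc (p * q).degree ≤ p.degree + q.degree := degree_mul_le p q
      _ ≤ a + b := add_le_add (mem_degreeLE.1 hp) (mem_degreeLE.1 hq)
      _ = ↑(a + b) := by norm_cast
  · rw [degreeLE_eq_span_X_pow, Submodule.span_le]
    intro p hp
    obtain ⟨d, hd, rfl⟩ := Finset.mem_image.1 hp
    have hd : d < a + b + 1 := Finset.mem_range.1 hd
    have hX_pow_mem {e c : ℕ} (h : e ≤ c) : (X ^ e : R[X]) ∈ degreeLE R c :=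
      mem_degreeLE.2 ((degree_X_pow_le e).trans (by exact_mod_cast h))
    rw [SetLike.mem_coe, ← Nat.add_sub_of_le (min_le_left d a), pow_add]
    exact Submodule.mul_mem_mul (hX_pow_mem (min_le_right d a)) (hX_pow_mem (by omega))

theorem degreeLE_pow (c g : ℕ) : degreeLE R c ^ g = degreeLE R ↑(g * c) := by
  induction g with
  | zero => simpa using degreeLE_zero_eq_one.symm
  | succ g ih => rw [pow_succ, ih, degreeLE_mul_degreeLE, Nat.succ_mul]

end Polynomial

section RScode

variable {F : Type*} [Field F] {n : ℕ} (α : Fin n → F)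

theorem RScode_eq_map_aeval (m : ℕ) :
    RScode F α m = (degreeLT F m).map (AlgHom.pi fun i => aeval (α i)).toLinearMap :=
  rfl

theorem RScode_pow (c g : ℕ) : RScode F α (c + 1) ^ g = RScode F α (g * c + 1) := by
  rw [RScode_eq_map_aeval, RScode_eq_map_aeval, ← Submodule.map_pow,
    degreeLT_succ_eq_degreeLE, degreeLT_succ_eq_degreeLE, degreeLE_pow]

variable {α}

theorem RScode_eq_top_of_le (hα : Function.Injective α) {m : ℕ} (hm : n ≤ m) :
    RScode F α m = ⊤ := by
  classical
  refine eq_top_iff.2 fun v _ => ⟨Lagrange.interpolate Finset.univ α v, ?_, ?_⟩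
  · refine degreeLT_mono hm (mem_degreeLT.2 ?_)
    simpa using Lagrange.degree_interpolate_lt (s := Finset.univ) v hα.injOn
  · ext j
    exact Lagrange.eval_interpolate_at_node v hα.injOn (Finset.mem_univ j)

theorem RScode_min_length (hα : Function.Injective α) (m : ℕ) :
    RScode F α (min m n) = RScode F α m := by
  rcases le_total m n with h | h
  · rw [min_eq_left h]
  · rw [min_eq_right h, RScode_eq_top_of_le hα le_rfl, RScode_eq_top_of_le hα h]

end RScode

theorem rs_star_product_general (F : Type*) [Field F] (n k g : ℕ) (hk : 1 ≤ k)
    (α : Fin n → F) (hα : Function.Injective α) :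
    Submodule.span F
      {v : Fin n → F | ∃ w : Fin g → Fin n → F,
        (∀ i, w i ∈ RScode F α k) ∧ v = fun j => ∏ i, w i j}
      = RScode F α (min (g * (k - 1) + 1) n) := by
  obtain ⟨c, rfl⟩ := Nat.exists_eq_add_of_le' hk
  simp_rw [← Finset.prod_fn]
  rw [← Submodule.pow_eq_span_setOf_prod, RScode_pow, RScode_min_length hα, Nat.add_sub_cancel]

/-- **Star-product of Reed–Solomon codes.** For an injective evaluation vector `α`,
the `g`-fold star-product of `RS_k(α)` with itself (the span of componentwise
products of `g` codewords of `RS_k(α)`) is `RS_{min(g(k-1)+1, n)}(α)`. -/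
theorem rs_star_product (F : Type*) [Field F] (n k g : ℕ) (hn : 1 ≤ n) (hk : 1 ≤ k)
    (hg : 1 ≤ g) (α : Fin n → F) (hα : Function.Injective α) :
    Submodule.span F
      {v : Fin n → F | ∃ w : Fin g → Fin n → F,
        (∀ i, w i ∈ RScode F α k) ∧ v = fun j => ∏ i, w i j}
      = RScode F α (min (g * (k - 1) + 1) n) :=
  rs_star_product_general F n k g hk α hα
end

section
/- (Shearer's Lemma.) Let n and κ be natural numbers, let S_1, …, S_n be finite nonempty sets, and let p be a probability mass function on S_1 × ⋯ × S_n. Let 𝒮 be a finite collection (multiset) of subsets of {1, …, n} such that every index j ∈ {1, …, n} is contained in at least κ members of 𝒮. Then Σ_{A ∈ 𝒮} H(p_A) ≥ κ · H(p), where p_A is the marginal of p on the coordinates in A. -/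
open Finset

/-- Shannon entropy of a probability mass function on a finite set (with the
convention `0 · log 0 = 0`, built into `Real.negMulLog`). -/
noncomputable def entropy {α : Type*} [Fintype α] (p : α → ℝ) : ℝ :=
  ∑ x, Real.negMulLog (p x)

/-- The marginal of a pmf `p` on `∏ j, S j` on the coordinates in `A`: the
pushforward of `p` under the restriction map onto the coordinates in `A`. -/
noncomputable def marginal {n : ℕ} {S : Fin n → Type*} [∀ j, Fintype (S j)]
    [∀ j, DecidableEq (S j)] (p : (∀ j, S j) → ℝ) (A : Finset (Fin n))
    (y : ∀ j : {x : Fin n // x ∈ A}, S j.1) : ℝ :=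
  ∑ x : ∀ j, S j, if (fun j : {x : Fin n // x ∈ A} => x j.1) = y then p x else 0

/-!
Write `H(f)` for the entropy of the law of `f(ω)` when `ω` has law `p`. Grouping the atoms by
`(f ω, g ω)` and using `log t ≤ t - 1` shows that `H` is submodular: if `h` is a function both
of `f` and of `g`, then `H(f, g) + H(h) ≤ H(f) + H(g)`; taking `g = f` gives monotonicity.
Applied to coordinate projections, `A ↦ H(p_A)` is a monotone submodular set function vanishing
at `∅`. For such a function, adding an index `j` to `T` increases `f T` by at most the increase
of `f (A ∩ T)` for each of the at least `κ` sets `A ∋ j` of `𝒮`, and induction on `T` gives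
`κ f(univ) ≤ ∑_{A ∈ 𝒮} f A`.
-/

theorem Multiset.sum_map_ite_eq_countP_mul {ι : Type*} (P : ι → Prop) [DecidablePred P]
    (s : Multiset ι) (d : ℝ) :
    (s.map fun i => if P i then d else 0).sum = s.countP P * d := by
  induction s using Multiset.induction_on with
  | empty => simp
  | cons i s ih => by_cases h : P i <;> simp [h, ih]; ring

theorem Finset.restrict_eq_restrict_iff {ι : Type*} {π : ι → Type*} {A : Finset ι}
    {x y : ∀ i, π i} : A.restrict x = A.restrict y ↔ ∀ i ∈ A, x i = y i := by
  simp [funext_iff]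

theorem Real.log_add_log_sub_log_sub_log_le {a b c d : ℝ} (ha : 0 < a) (hb : 0 < b)
    (hc : 0 < c) (hd : 0 < d) :
    log a + log b - log c - log d ≤ a * b / (c * d) - 1 := by
  have := log_le_sub_one_of_pos (show 0 < a * b / (c * d) by positivity)
  rw [log_div (by positivity) (by positivity), log_mul ha.ne' hb.ne',
    log_mul hc.ne' hd.ne'] at this
  linarith

section Submodular

variable {ι : Type*} [DecidableEq ι] {f : Finset ι → ℝ}

theorem mul_le_sum_map_inter (hmono : Monotone f)
    (hsub : ∀ A B, f (A ∪ B) + f (A ∩ B) ≤ f A + f B) (hempty : f ∅ = 0)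
    {𝒮 : Multiset (Finset ι)} {κ : ℕ} (T : Finset ι) (hκ : ∀ j ∈ T, κ ≤ 𝒮.countP (j ∈ ·)) :
    κ * f T ≤ (𝒮.map fun A => f (A ∩ T)).sum := by
  induction T using Finset.induction_on with
  | empty => simp [hempty]
  | insert j T hj ih =>
    set d := f (insert j T) - f T
    have hd : 0 ≤ d := sub_nonneg.2 (hmono (subset_insert j T))
    have hstep (A : Finset ι) :
        (if j ∈ A then d else 0) ≤ f (A ∩ insert j T) - f (A ∩ T) := by
      by_cases hjA : j ∈ A
      · have hunion : A ∩ insert j T ∪ T = insert j T := by ext; simp; grind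
        have hinter : A ∩ insert j T ∩ T = A ∩ T := by ext; simp; grind
        have := hsub (A ∩ insert j T) T
        rw [hunion, hinter] at this
        rw [if_pos hjA]
        linarith
      · rw [if_neg hjA, inter_insert_of_notMem hjA, sub_self]
    have hsum := Multiset.sum_map_le_sum_map (s := 𝒮) _ _ fun A _ => hstep A
    rw [Multiset.sum_map_ite_eq_countP_mul, Multiset.sum_map_sub] at hsum
    have hcount : (κ : ℝ) ≤ 𝒮.countP (j ∈ ·) := by exact_mod_cast hκ j (mem_insert_self j T)
    have := mul_le_mul_of_nonneg_right hcount hd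
    have := ih fun i hi => hκ i (mem_insert_of_mem hi)
    linarith

theorem mul_le_sum_map [Fintype ι] (hmono : Monotone f)
    (hsub : ∀ A B, f (A ∪ B) + f (A ∩ B) ≤ f A + f B) (hempty : f ∅ = 0)
    {𝒮 : Multiset (Finset ι)} {κ : ℕ} (hκ : ∀ j, κ ≤ 𝒮.countP (j ∈ ·)) :
    κ * f univ ≤ (𝒮.map f).sum := by
  simpa using mul_le_sum_map_inter hmono hsub hempty univ fun j _ => hκ j

end Submodular

noncomputable def pushforward {Ω α : Type*} [Fintype Ω] [DecidableEq α] (p : Ω → ℝ)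
    (f : Ω → α) (a : α) : ℝ :=
  ∑ ω, if f ω = a then p ω else 0

section Pushforward

variable {Ω α β γ : Type*} [Fintype Ω] [DecidableEq α] [DecidableEq β] [DecidableEq γ]
  {p : Ω → ℝ}

theorem pushforward_nonneg (hp0 : ∀ ω, 0 ≤ p ω) (f : Ω → α) (a : α) :
    0 ≤ pushforward p f a :=
  sum_nonneg fun ω _ => by split_ifs <;> simp [hp0]

theorem le_pushforward_apply (hp0 : ∀ ω, 0 ≤ p ω) (f : Ω → α) (ω : Ω) :
    p ω ≤ pushforward p f (f ω) := by
  simpa [pushforward] using single_le_sum (f := fun ω' => if f ω' = f ω then p ω' else 0)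
    (fun ω' _ => by split_ifs <;> simp [hp0]) (mem_univ ω)

theorem exists_eq_of_pushforward_ne_zero {f : Ω → α} {a : α} (h : pushforward p f a ≠ 0) :
    ∃ ω, f ω = a := by
  by_contra! hne
  exact h (sum_eq_zero fun ω _ => if_neg (hne ω))

theorem pushforward_id [DecidableEq Ω] : pushforward p id = p := by
  funext ω
  simp [pushforward]

theorem sum_pushforward_mul [Fintype α] (f : Ω → α) (F : α → ℝ) :
    ∑ a, pushforward p f a * F a = ∑ ω, p ω * F (f ω) := by
  simp only [pushforward, sum_mul, ite_mul, zero_mul]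
  rw [sum_comm]
  simp

theorem sum_pushforward [Fintype α] (f : Ω → α) : ∑ a, pushforward p f a = ∑ ω, p ω := by
  simpa using sum_pushforward_mul (p := p) f 1

theorem pushforward_pushforward [Fintype α] (f : Ω → α) (φ : α → β) :
    pushforward (pushforward p f) φ = pushforward p (φ ∘ f) := by
  funext b
  have := sum_pushforward_mul (p := p) f fun a => if φ a = b then 1 else 0
  simp only [mul_ite, mul_one, mul_zero] at this
  exact this

theorem pushforward_apply_congr {f : Ω → α} {g : Ω → β}
    (hfg : ∀ ω ω', f ω = f ω' ↔ g ω = g ω') (ω : Ω) :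
    pushforward p g (g ω) = pushforward p f (f ω) :=
  sum_congr rfl fun ω' _ => if_congr (hfg ω' ω).symm rfl rfl

theorem entropy_pushforward [Fintype α] (f : Ω → α) :
    entropy (pushforward p f) = ∑ ω, p ω * -Real.log (pushforward p f (f ω)) := by
  rw [entropy, ← sum_pushforward_mul f fun a => -Real.log (pushforward p f a)]
  simp only [Real.negMulLog, neg_mul, mul_neg]

theorem entropy_pushforward_congr [Fintype α] [Fintype β] {f : Ω → α} {g : Ω → β}
    (hfg : ∀ ω ω', f ω = f ω' ↔ g ω = g ω') :
    entropy (pushforward p g) = entropy (pushforward p f) := by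
  simp only [entropy_pushforward, pushforward_apply_congr hfg]

theorem entropy_pushforward_of_subsingleton [Fintype α] [Subsingleton α]
    (hp1 : ∑ ω, p ω = 1) (f : Ω → α) : entropy (pushforward p f) = 0 := by
  have h (ω : Ω) : pushforward p f (f ω) = 1 := by
    simp [pushforward, Subsingleton.elim (f _) (f ω), hp1]
  simp [entropy_pushforward, h]

theorem sum_mul_pushforward_ratio_le_one [Fintype α] [Fintype β] (hp0 : ∀ ω, 0 ≤ p ω)
    (hp1 : ∑ ω, p ω = 1) (f : Ω → α) (g : Ω → β) (φ : α → γ) (ψ : β → γ)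
    (hφψ : ∀ ω, φ (f ω) = ψ (g ω)) :
    ∑ ω, p ω * (pushforward p f (f ω) * pushforward p g (g ω) /
      (pushforward p (fun ω => (f ω, g ω)) (f ω, g ω) * pushforward p (φ ∘ f) (φ (f ω)))) ≤
      1 := by
  set Qf := pushforward p f
  set Qg := pushforward p g
  set Qfg := pushforward p fun ω => (f ω, g ω)
  set Qh := pushforward p (φ ∘ f)
  have hQh : pushforward Qg ψ = Qh := by
    rw [pushforward_pushforward, show ψ ∘ g = φ ∘ f from funext fun ω => (hφψ ω).symm]
  have hpair (a : α) (b : β) : Qfg (a, b) * (Qf a * Qg b / (Qfg (a, b) * Qh (φ a))) ≤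
      if φ a = ψ b then Qf a * Qg b / Qh (φ a) else 0 := by
    have hnonneg : 0 ≤ Qf a * Qg b / Qh (φ a) := by
      have := pushforward_nonneg hp0 f a
      have := pushforward_nonneg hp0 g b
      have := pushforward_nonneg hp0 (φ ∘ f) (φ a)
      positivity
    by_cases h0 : Qfg (a, b) = 0
    · rw [h0, zero_mul]
      split_ifs <;> simp [hnonneg]
    · obtain ⟨ω, hω⟩ := exists_eq_of_pushforward_ne_zero h0
      obtain ⟨rfl, rfl⟩ := Prod.mk.inj hω
      rw [if_pos (hφψ ω), ← mul_div_assoc, mul_div_mul_left _ _ h0]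
  -- Grouped by `(f ω, g ω)`, the sum is the mass, on the support of `(f, g)`, of the law
  -- `Qf a * Qg b / Qh (φ a)` (on `φ a = ψ b`), under which `f` and `g` are conditionally
  -- independent given `φ ∘ f`.
  calc ∑ ω, p ω * (Qf (f ω) * Qg (g ω) / (Qfg (f ω, g ω) * Qh (φ (f ω))))
      = ∑ ab : α × β, Qfg ab * (Qf ab.1 * Qg ab.2 / (Qfg ab * Qh (φ ab.1))) :=
        (sum_pushforward_mul (fun ω => (f ω, g ω))
          fun ab => Qf ab.1 * Qg ab.2 / (Qfg ab * Qh (φ ab.1))).symm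
    _ ≤ ∑ a, ∑ b, if φ a = ψ b then Qf a * Qg b / Qh (φ a) else 0 := by
        rw [Fintype.sum_prod_type]
        exact sum_le_sum fun a _ => sum_le_sum fun b _ => hpair a b
    _ = ∑ a, Qf a / Qh (φ a) * pushforward Qg ψ (φ a) := by
        refine sum_congr rfl fun a _ => ?_
        rw [pushforward, mul_sum]
        refine sum_congr rfl fun b _ => ?_
        by_cases h : φ a = ψ b
        · rw [if_pos h, if_pos h.symm]
          ring
        · rw [if_neg h, if_neg (Ne.symm h), mul_zero]
    _ ≤ ∑ a, Qf a := by
        rw [hQh]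
        refine sum_le_sum fun a _ => ?_
        by_cases h : Qh (φ a) = 0
        · simpa [h] using pushforward_nonneg hp0 f a
        · rw [div_mul_cancel₀ _ h]
    _ = 1 := by rw [sum_pushforward, hp1]

theorem entropy_pushforward_prod_add_le [Fintype α] [Fintype β] [Fintype γ]
    (hp0 : ∀ ω, 0 ≤ p ω) (hp1 : ∑ ω, p ω = 1) (f : Ω → α) (g : Ω → β) (φ : α → γ)
    (ψ : β → γ) (hφψ : ∀ ω, φ (f ω) = ψ (g ω)) :
    entropy (pushforward p fun ω => (f ω, g ω)) + entropy (pushforward p (φ ∘ f)) ≤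
      entropy (pushforward p f) + entropy (pushforward p g) := by
  simp only [entropy_pushforward, Function.comp_apply]
  set Qf := pushforward p f
  set Qg := pushforward p g
  set Qfg := pushforward p fun ω => (f ω, g ω)
  set Qh := pushforward p (φ ∘ f)
  set R := fun ω => Qf (f ω) * Qg (g ω) / (Qfg (f ω, g ω) * Qh (φ (f ω)))
  have hpoint (ω : Ω) :
      p ω * -Real.log (Qfg (f ω, g ω)) + p ω * -Real.log (Qh (φ (f ω))) ≤
        p ω * -Real.log (Qf (f ω)) + p ω * -Real.log (Qg (g ω)) + (p ω * R ω - p ω) := by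
    rcases (hp0 ω).eq_or_lt with hω | hω
    · simp [← hω]
    have hlog : Real.log (Qf (f ω)) + Real.log (Qg (g ω)) - Real.log (Qfg (f ω, g ω)) -
        Real.log (Qh (φ (f ω))) ≤ R ω - 1 :=
      Real.log_add_log_sub_log_sub_log_le (hω.trans_le (le_pushforward_apply hp0 f ω))
        (hω.trans_le (le_pushforward_apply hp0 g ω))
        (hω.trans_le (le_pushforward_apply hp0 (fun ω => (f ω, g ω)) ω))
        (hω.trans_le (le_pushforward_apply hp0 (φ ∘ f) ω))
    linarith [mul_le_mul_of_nonneg_left hlog hω.le]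
  have hsum := sum_le_sum fun ω (_ : ω ∈ univ) => hpoint ω
  have hratio : ∑ ω, p ω * R ω ≤ 1 := sum_mul_pushforward_ratio_le_one hp0 hp1 f g φ ψ hφψ
  simp only [sum_add_distrib, sum_sub_distrib] at hsum
  linarith

theorem entropy_pushforward_comp_le [Fintype α] [Fintype γ] (hp0 : ∀ ω, 0 ≤ p ω)
    (hp1 : ∑ ω, p ω = 1) (f : Ω → α) (φ : α → γ) :
    entropy (pushforward p (φ ∘ f)) ≤ entropy (pushforward p f) := by
  have hdiag : entropy (pushforward p fun ω => (f ω, f ω)) = entropy (pushforward p f) :=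
    entropy_pushforward_congr fun ω ω' => by simp
  have := entropy_pushforward_prod_add_le hp0 hp1 f f φ φ fun _ => rfl
  linarith

end Pushforward

section Marginal

variable {n : ℕ} {S : Fin n → Type*} [∀ j, Fintype (S j)] [∀ j, DecidableEq (S j)]
  {p : (∀ j, S j) → ℝ}

theorem marginal_eq_pushforward (p : (∀ j, S j) → ℝ) (A : Finset (Fin n)) :
    marginal p A = pushforward p A.restrict :=
  rfl

theorem entropy_marginal_empty (hp1 : ∑ x, p x = 1) : entropy (marginal p ∅) = 0 :=
  entropy_pushforward_of_subsingleton hp1 _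

theorem entropy_marginal_univ : entropy (marginal p univ) = entropy p := by
  rw [marginal_eq_pushforward, entropy_pushforward_congr (f := id), pushforward_id]
  simp [funext_iff]

theorem entropy_marginal_mono (hp0 : ∀ x, 0 ≤ p x) (hp1 : ∑ x, p x = 1) :
    Monotone fun A => entropy (marginal p A) := by
  intro A B hAB
  simp only [marginal_eq_pushforward, ← Finset.restrict₂_comp_restrict hAB]
  exact entropy_pushforward_comp_le hp0 hp1 _ _

theorem entropy_marginal_union_add_inter_le (hp0 : ∀ x, 0 ≤ p x) (hp1 : ∑ x, p x = 1)
    (A B : Finset (Fin n)) :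
    entropy (marginal p (A ∪ B)) + entropy (marginal p (A ∩ B)) ≤
      entropy (marginal p A) + entropy (marginal p B) := by
  have hunion : entropy (pushforward p (A ∪ B).restrict) =
      entropy (pushforward p fun x => (A.restrict x, B.restrict x)) :=
    entropy_pushforward_congr fun x y => by
      simp only [Finset.restrict_eq_restrict_iff, Prod.ext_iff, mem_union]
      grind
  simp only [marginal_eq_pushforward]
  rw [hunion, ← Finset.restrict₂_comp_restrict (inter_subset_left (s₁ := A) (s₂ := B))]
  exact entropy_pushforward_prod_add_le hp0 hp1 _ _ _
    (Finset.restrict₂ inter_subset_right) fun _ => rfl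

end Marginal

theorem shearer_general {n κ : ℕ} {S : Fin n → Type*} [∀ j, Fintype (S j)]
    [∀ j, DecidableEq (S j)]
    (p : (∀ j, S j) → ℝ) (hp0 : ∀ x, 0 ≤ p x) (hp1 : ∑ x, p x = 1)
    (𝒮 : Multiset (Finset (Fin n)))
    (hκ : ∀ j : Fin n, κ ≤ 𝒮.countP (fun A => j ∈ A)) :
    (κ : ℝ) * entropy p ≤ (𝒮.map (fun A => entropy (marginal p A))).sum := by
  rw [← entropy_marginal_univ]
  exact mul_le_sum_map (entropy_marginal_mono hp0 hp1)
    (entropy_marginal_union_add_inter_le hp0 hp1) (entropy_marginal_empty hp1) hκ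

/-- **Shearer's Lemma.** If `𝒮` is a finite collection (multiset) of subsets of
`{1, …, n}` such that every index `j` is contained in at least `κ` members of `𝒮`,
then `Σ_{A ∈ 𝒮} H(p_A) ≥ κ · H(p)` for any pmf `p` on a finite product. -/
theorem shearer {n κ : ℕ} {S : Fin n → Type*} [∀ j, Fintype (S j)]
    [∀ j, DecidableEq (S j)] [∀ j, Nonempty (S j)]
    (p : (∀ j, S j) → ℝ) (hp0 : ∀ x, 0 ≤ p x) (hp1 : ∑ x, p x = 1)
    (𝒮 : Multiset (Finset (Fin n)))
    (hκ : ∀ j : Fin n, κ ≤ 𝒮.countP (fun A => j ∈ A)) :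
    (κ : ℝ) * entropy p ≤ (𝒮.map (fun A => entropy (marginal p A))).sum :=
  shearer_general p hp0 hp1 𝒮 hκ
end

section
/- For all natural numbers μ, η, κ, ν with μ ≥ 1, η ≤ μ and κ ≤ ν, the identity Σ_{τ=2}^{μ} (C(μ,τ) − C(η,τ)) · κ^{μ−τ} · (ν−κ)^{τ} = ν^{μ} − κ^{μ−η} · ν^{η} − (μ−η) · κ^{μ−1} · (ν−κ) holds (as an identity of integers), where C(a,b) denotes the binomial coefficient with the convention C(a,b) = 0 when b > a. -/
/-! With `a = κ` and `b = ν - κ`, so that `a + b = ν`, both sums over `τ ≤ μ` are binomial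
expansions, of `ν ^ μ` and of `κ ^ (μ - η) * ν ^ η`; the sum over `2 ≤ τ` differs from their
difference by the terms `τ = 0` (which cancel) and `τ = 1`. -/

open Finset

section BinomialSums

variable {R : Type*} [CommRing R] (a b : R)

theorem sum_range_choose_mul_pow_mul_pow (m : ℕ) :
    ∑ τ ∈ range (m + 1), (m.choose τ : R) * a ^ (m - τ) * b ^ τ = (a + b) ^ m := by
  rw [add_comm a b, add_pow]
  exact sum_congr rfl fun τ _ ↦ by ring

-- The terms with `n < τ ≤ m` vanish, and `a ^ (m - τ) = a ^ (m - n) * a ^ (n - τ)` for `τ ≤ n`.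
theorem sum_range_choose_mul_pow_mul_pow_of_le {n m : ℕ} (hnm : n ≤ m) :
    ∑ τ ∈ range (m + 1), (n.choose τ : R) * a ^ (m - τ) * b ^ τ
      = a ^ (m - n) * (a + b) ^ n := by
  have hsub : range (n + 1) ⊆ range (m + 1) := range_subset_range.2 (by omega)
  rw [← sum_subset hsub fun τ _ hτ ↦ by
      rw [Nat.choose_eq_zero_of_lt (by simpa using hτ), Nat.cast_zero, zero_mul, zero_mul],
    ← sum_range_choose_mul_pow_mul_pow, mul_sum]
  refine sum_congr rfl fun τ hτ ↦ ?_
  rw [show m - τ = (m - n) + (n - τ) by simp at hτ; omega, pow_add]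
  ring

theorem sum_Icc_two_eq_sum_range_sub {M : Type*} [AddCommGroup M] (f : ℕ → M) {m : ℕ}
    (hm : 1 ≤ m) : ∑ τ ∈ Icc 2 m, f τ = ∑ τ ∈ range (m + 1), f τ - f 0 - f 1 := by
  rw [range_eq_Ico, sum_eq_sum_Ico_succ_bot (by omega), sum_eq_sum_Ico_succ_bot (by omega),
    Ico_add_one_right_eq_Icc]
  abel

theorem sum_Icc_two_choose_sub_choose_mul_pow_mul_pow {n m : ℕ} (hm : 1 ≤ m) (hnm : n ≤ m) :
    ∑ τ ∈ Icc 2 m, ((m.choose τ : R) - n.choose τ) * a ^ (m - τ) * b ^ τ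
      = (a + b) ^ m - a ^ (m - n) * (a + b) ^ n - ((m : R) - n) * a ^ (m - 1) * b := by
  rw [sum_Icc_two_eq_sum_range_sub _ hm]
  simp only [sub_mul, sum_sub_distrib, sum_range_choose_mul_pow_mul_pow,
    sum_range_choose_mul_pow_mul_pow_of_le a b hnm, Nat.choose_zero_right, Nat.choose_one_right]
  ring

end BinomialSums

theorem ppc_rate_identity_general (μ η κ ν : ℕ) (hμ : 1 ≤ μ) (hη : η ≤ μ) :
    ∑ τ ∈ Finset.Icc 2 μ,
        ((μ.choose τ : ℤ) - (η.choose τ : ℤ)) * (κ : ℤ) ^ (μ - τ) *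
          ((ν : ℤ) - (κ : ℤ)) ^ τ
      = (ν : ℤ) ^ μ - (κ : ℤ) ^ (μ - η) * (ν : ℤ) ^ η
          - ((μ : ℤ) - (η : ℤ)) * (κ : ℤ) ^ (μ - 1) * ((ν : ℤ) - (κ : ℤ)) := by
  simpa only [add_sub_cancel] using
    sum_Icc_two_choose_sub_choose_mul_pow_mul_pow (κ : ℤ) ((ν : ℤ) - κ) hμ hη

/-- The algebraic core of the achievable PPC rate (Theorem 5):
`Σ_{τ=2}^{μ} (C(μ,τ) − C(η,τ)) κ^{μ−τ} (ν−κ)^{τ}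
  = ν^{μ} − κ^{μ−η} ν^{η} − (μ−η) κ^{μ−1} (ν−κ)`
for natural numbers `μ ≥ 1`, `η ≤ μ`, `κ ≤ ν`, as an identity of integers
(with the convention `C(a,b) = 0` for `b > a`). -/
theorem ppc_rate_identity (μ η κ ν : ℕ) (hμ : 1 ≤ μ) (hη : η ≤ μ) (hκ : κ ≤ ν) :
    ∑ τ ∈ Finset.Icc 2 μ,
        ((μ.choose τ : ℤ) - (η.choose τ : ℤ)) * (κ : ℤ) ^ (μ - τ) *
          ((ν : ℤ) - (κ : ℤ)) ^ τ
      = (ν : ℤ) ^ μ - (κ : ℤ) ^ (μ - η) * (ν : ℤ) ^ η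
          - ((μ : ℤ) - (η : ℤ)) * (κ : ℤ) ^ (μ - 1) * ((ν : ℤ) - (κ : ℤ)) :=
  ppc_rate_identity_general μ η κ ν hμ hη
end

section
/- Let k, k̃, n be integers with 1 ≤ k ≤ k̃ ≤ n, and let n̂ and ν be as defined in the context. Then ν is given by the following case formula: ν = n − k̃ + k if ⌊n/k̃⌋ = 1 and n − ⌊n/k̃⌋·k̃ < k; ν = ⌊n/k̃⌋·k if ⌊n/k̃⌋ > 1 and n − ⌊n/k̃⌋·k̃ < k; and ν = ⌊n/k̃⌋·k + k if n − ⌊n/k̃⌋·k̃ ≥ k. -/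
/-! If `N = a·k̃ + j` with `j ≤ k ≤ k̃`, then `⌊N/k̃⌋ = a` (or `j = k = k̃`, where `k̃ − k = 0`),
so `N − ⌊N/k̃⌋·(k̃ − k) = a·k + j`. In the three cases `n̂` has this shape, namely
`1·k̃ + (n − k̃)`, `(⌊n/k̃⌋ − 1)·k̃ + k` and `⌊n/k̃⌋·k̃ + k`. -/

/-- The number `n̂` of utilized databases of the systematic PPC scheme:
`n̂ = n` if `⌊n/k̃⌋ = 1` and `n − ⌊n/k̃⌋·k̃ < k`;
`n̂ = k + (⌊n/k̃⌋ − 1)·k̃` if `⌊n/k̃⌋ > 1` and `n − ⌊n/k̃⌋·k̃ < k`;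
`n̂ = k + ⌊n/k̃⌋·k̃` if `n − ⌊n/k̃⌋·k̃ ≥ k`. -/
def nhat (k kt n : ℕ) : ℕ :=
  if n - n / kt * kt < k then
    (if n / kt = 1 then n else k + (n / kt - 1) * kt)
  else k + n / kt * kt

/-- `ν = n̂ − ⌊n̂/k̃⌋·(k̃ − k)`. -/
def nuV (k kt n : ℕ) : ℕ := nhat k kt n - nhat k kt n / kt * (kt - k)

theorem sub_div_mul_sub_eq {k kt : ℕ} (hk : k ≤ kt) (a : ℕ) {j : ℕ} (hj : j ≤ k) :
    a * kt + j - (a * kt + j) / kt * (kt - k) = a * k + j := by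
  rcases (hj.trans hk).lt_or_eq with hjkt | rfl
  · have hdiv : (a * kt + j) / kt = a := by
      rw [Nat.mul_comm, Nat.mul_add_div (by omega), Nat.div_eq_of_lt hjkt, Nat.add_zero]
    have hsplit : a * kt = a * (kt - k) + a * k := by rw [← Nat.mul_add, Nat.sub_add_cancel hk]
    rw [hdiv]
    omega
  · obtain rfl : k = j := le_antisymm hk hj
    simp

theorem nuV_eq_of_nhat_eq {k kt n a j : ℕ} (hk : k ≤ kt) (hj : j ≤ k)
    (h : nhat k kt n = a * kt + j) : nuV k kt n = a * k + j := by
  rw [nuV, h, sub_div_mul_sub_eq hk a hj]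

theorem nu_formula_general (k kt n : ℕ) (hkkt : k ≤ kt) :
    (n / kt = 1 → n - n / kt * kt < k → nuV k kt n = n - kt + k) ∧
    (1 < n / kt → n - n / kt * kt < k → nuV k kt n = n / kt * k) ∧
    (k ≤ n - n / kt * kt → nuV k kt n = n / kt * k + k) := by
  refine ⟨fun hq hr => ?_, fun hq hr => ?_, fun hr => ?_⟩
  · have hle : n / kt * kt ≤ n := Nat.div_mul_le_self n kt
    rw [hq, one_mul] at hle hr
    have hnhat : nhat k kt n = 1 * kt + (n - kt) := by
      rw [nhat, if_pos (by rwa [hq, one_mul]), if_pos hq]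
      omega
    rw [nuV_eq_of_nhat_eq hkkt hr.le hnhat]
    omega
  · have hnhat : nhat k kt n = (n / kt - 1) * kt + k := by
      rw [nhat, if_pos hr, if_neg hq.ne', Nat.add_comm]
    rw [nuV_eq_of_nhat_eq hkkt le_rfl hnhat, ← Nat.succ_mul, Nat.succ_eq_add_one,
      Nat.sub_add_cancel hq.le]
  · have hnhat : nhat k kt n = n / kt * kt + k := by
      rw [nhat, if_neg (by omega), Nat.add_comm]
    exact nuV_eq_of_nhat_eq hkkt le_rfl hnhat

/-- Case formula for `ν` (Lemma "nu_formula" of the paper):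
`ν = n − k̃ + k` if `⌊n/k̃⌋ = 1` and `n − ⌊n/k̃⌋·k̃ < k`;
`ν = ⌊n/k̃⌋·k` if `⌊n/k̃⌋ > 1` and `n − ⌊n/k̃⌋·k̃ < k`;
`ν = ⌊n/k̃⌋·k + k` if `n − ⌊n/k̃⌋·k̃ ≥ k`. -/
theorem nu_formula (k kt n : ℕ) (hk : 1 ≤ k) (hkkt : k ≤ kt) (hktn : kt ≤ n) :
    (n / kt = 1 → n - n / kt * kt < k → nuV k kt n = n - kt + k) ∧
    (1 < n / kt → n - n / kt * kt < k → nuV k kt n = n / kt * k) ∧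
    (k ≤ n - n / kt * kt → nuV k kt n = n / kt * k + k) :=
  nu_formula_general k kt n hkkt
end

section
/- Let k, k̃, n be integers with 1 ≤ k ≤ k̃ ≤ n, and let n̂ and ν be as defined in the context. Then (n̂ = n and ν = k + min(k, n − k̃)) holds if and only if n − k̃ ≤ k. -/
theorem Nat.sub_div_mul_sub_eq_mod_add_div_mul {k kt : ℕ} (m : ℕ) (hkkt : k ≤ kt) :
    m - m / kt * (kt - k) = m % kt + m / kt * k := by
  have hdecomp := Nat.div_add_mod' m kt
  have hle : m / kt * k ≤ m / kt * kt := Nat.mul_le_mul_left _ hkkt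
  rw [Nat.mul_sub]
  omega

theorem nuV_eq_mod_add_div_mul {k kt : ℕ} (n : ℕ) (hkkt : k ≤ kt) :
    nuV k kt n = nhat k kt n % kt + nhat k kt n / kt * k :=
  Nat.sub_div_mul_sub_eq_mod_add_div_mul _ hkkt

theorem nhat_eq_self_of_le_add {k kt n : ℕ} (hkkt : k ≤ kt) (hktn : kt ≤ n) (hnk : n ≤ kt + k) :
    nhat k kt n = n := by
  rcases Nat.eq_zero_or_pos kt with rfl | hkt
  · obtain rfl : k = 0 := by omega
    obtain rfl : n = 0 := by omega
    rfl
  have hdecomp := Nat.div_add_mod' n kt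
  have hq_le : n / kt ≤ 2 := Nat.div_le_of_le_mul (by omega)
  have hq_pos : 1 ≤ n / kt := (Nat.one_le_div_iff hkt).mpr hktn
  obtain hq | hq : n / kt = 1 ∨ n / kt = 2 := by omega
  all_goals
    rw [nhat, hq]
    rw [hq] at hdecomp
    split_ifs <;> omega

theorem nhat_two_mul {k kt : ℕ} (hk : 0 < k) (hkt : 0 < kt) : nhat k kt (2 * kt) = k + kt := by
  rw [nhat, Nat.mul_div_cancel _ hkt, if_pos (by omega), if_neg (by omega)]
  omega

theorem mod_add_div_mul_eq_add_min_iff {k kt n : ℕ} (hk : 0 < k) (hkkt : k ≤ kt) (hktn : kt ≤ n) :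
    n % kt + n / kt * k = k + min k (n - kt) ↔ n ≤ kt + k ∨ n = 2 * kt := by
  have hkt : 0 < kt := hk.trans_le hkkt
  have hq_pos : 1 ≤ n / kt := (Nat.one_le_div_iff hkt).mpr hktn
  have hdecomp := Nat.div_add_mod' n kt
  have hr := Nat.mod_lt n hkt
  obtain hq1 | hq2 | hq3 : n / kt = 1 ∨ n / kt = 2 ∨ 3 ≤ n / kt := by omega
  · rw [hq1] at hdecomp ⊢
    omega
  · rw [hq2] at hdecomp ⊢
    omega
  · have := Nat.mul_le_mul_right k hq3
    have := Nat.mul_le_mul_right kt hq3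
    omega

/-- For `1 ≤ k ≤ k̃ ≤ n`: `n̂ = n` and `ν = k + min(k, n − k̃)` hold
if and only if `n − k̃ ≤ k`. -/
theorem systematic_scheme_equivalence (k kt n : ℕ)
    (hk : 1 ≤ k) (hkkt : k ≤ kt) (hktn : kt ≤ n) :
    (nhat k kt n = n ∧ nuV k kt n = k + min k (n - kt)) ↔ n - kt ≤ k := by
  rw [nuV_eq_mod_add_div_mul n hkkt]
  constructor
  · rintro ⟨hn, hnu⟩
    rw [hn, mod_add_div_mul_eq_add_min_iff hk hkkt hktn] at hnu
    rcases hnu with hle | rfl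
    · omega
    · have := nhat_two_mul hk (Nat.lt_of_lt_of_le hk hkkt)
      omega
  · intro hle
    have hn := nhat_eq_self_of_le_add hkkt hktn (by omega : n ≤ kt + k)
    rw [hn, mod_add_div_mul_eq_add_min_iff hk hkkt hktn]
    exact ⟨rfl, Or.inl (by omega)⟩
end

section
/- Let k, k̃, n̂, κ, ν, ρ be natural numbers with k ≤ k̃ ≤ n̂ and ρ = ⌊n̂/k̃⌋·κ ≤ ν. Suppose there is a family of subsets rows_1, …, rows_ν of {1, …, n̂} such that: every column index j ∈ {1, …, n̂} belongs to exactly κ of the sets rows_i; |rows_i| ≥ k̃ for each i ∈ {1, …, ρ}; and |rows_i| = k for each i ∈ {ρ+1, …, ν}. Then ⌊n̂/k̃⌋·κ·(k̃ − k) + ν·k ≤ κ·n̂; equivalently, κ/ν ≥ k/(n̂ − ⌊n̂/k̃⌋·(k̃ − k)). -/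
/-!
Summing the row sizes counts every column exactly `κ` times, so the sizes add up to `κ·n̂`;
on the other hand the first `ρ` rows contribute at least `ρ·k̃` and the remaining ones
`(ν − ρ)·k`, and `ρ·k̃ + (ν − ρ)·k = ρ·(k̃ − k) + ν·k`.
-/

open Finset

theorem Finset.sum_card_eq_mul_card_of_forall_card_filter_mem_eq {ι α : Type*} [Fintype ι]
    [Fintype α] [DecidableEq α] (B : ι → Finset α) {κ : ℕ} (hB : ∀ a, #{i | a ∈ B i} = κ) :
    ∑ i, #(B i) = κ * Fintype.card α := by
  have := sum_card_bipartiteAbove_eq_sum_card_bipartiteBelow (s := univ) (t := univ)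
    (fun i a => a ∈ B i)
  simp only [bipartiteAbove, bipartiteBelow, filter_mem_eq_inter, univ_inter] at this
  rw [this, Finset.sum_congr rfl fun a _ => hB a, sum_const, card_univ, smul_eq_mul, mul_comm]

theorem Fin.mul_add_mul_le_sum {ν ρ a b : ℕ} (hρν : ρ ≤ ν) (f : Fin ν → ℕ)
    (ha : ∀ i : Fin ν, (i : ℕ) < ρ → a ≤ f i) (hb : ∀ i : Fin ν, ρ ≤ (i : ℕ) → b ≤ f i) :
    ρ * a + (ν - ρ) * b ≤ ∑ i, f i := by
  obtain ⟨m, rfl⟩ := Nat.exists_eq_add_of_le hρν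
  rw [Fin.sum_univ_add, Nat.add_sub_cancel_left]
  gcongr
  · simpa using card_nsmul_le_sum univ (fun i : Fin ρ => f (castAdd m i)) a
      fun i _ => ha _ i.isLt
  · simpa using card_nsmul_le_sum univ (fun i : Fin m => f (natAdd ρ i)) b
      fun i _ => hb _ (Nat.le_add_right _ _)

theorem ppc_systematic_double_counting_general (k kt nhat κ ν ρ : ℕ)
    (hkkt : k ≤ kt)
    (hρ : ρ = nhat / kt * κ) (hρν : ρ ≤ ν)
    (rows : Fin ν → Finset (Fin nhat))
    (hcol : ∀ j : Fin nhat, (Finset.univ.filter fun i => j ∈ rows i).card = κ)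
    (hbig : ∀ i : Fin ν, (i : ℕ) < ρ → kt ≤ (rows i).card)
    (hsmall : ∀ i : Fin ν, ρ ≤ (i : ℕ) → (rows i).card = k) :
    nhat / kt * κ * (kt - k) + ν * k ≤ κ * nhat := by
  subst hρ
  calc nhat / kt * κ * (kt - k) + ν * k = nhat / kt * κ * kt + (ν - nhat / kt * κ) * k := by
        zify [hkkt, hρν]; ring
    _ ≤ ∑ i, #(rows i) := Fin.mul_add_mul_le_sum hρν _ hbig fun i hi => (hsmall i hi).ge
    _ = κ * nhat := by
        rw [sum_card_eq_mul_card_of_forall_card_filter_mem_eq rows hcol, Fintype.card_fin]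

/-- Double-counting bound for a PPC systematic achievable rate matrix, with rows
identified with their supports `rows i ⊆ {1, …, n̂}`: if every column index belongs
to exactly `κ` of the sets `rows i`, the first `ρ = ⌊n̂/k̃⌋·κ` sets have size at
least `k̃`, and the remaining `ν − ρ` sets have size exactly `k`, then
`⌊n̂/k̃⌋·κ·(k̃ − k) + ν·k ≤ κ·n̂` (equivalently, `κ/ν ≥ k/(n̂ − ⌊n̂/k̃⌋·(k̃ − k))`). -/
theorem ppc_systematic_double_counting (k kt nhat κ ν ρ : ℕ)
    (hkkt : k ≤ kt) (hktn : kt ≤ nhat)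
    (hρ : ρ = nhat / kt * κ) (hρν : ρ ≤ ν)
    (rows : Fin ν → Finset (Fin nhat))
    (hcol : ∀ j : Fin nhat, (Finset.univ.filter fun i => j ∈ rows i).card = κ)
    (hbig : ∀ i : Fin ν, (i : ℕ) < ρ → kt ≤ (rows i).card)
    (hsmall : ∀ i : Fin ν, ρ ≤ (i : ℕ) → (rows i).card = k) :
    nhat / kt * κ * (kt - k) + ν * k ≤ κ * nhat :=
  ppc_systematic_double_counting_general k kt nhat κ ν ρ hkkt hρ hρν rows hcol hbig hsmall
end

section
/- Let k, k̃, n̂ be integers with 1 ≤ k ≤ k̃ ≤ n̂ and suppose Γ := n̂ − ⌊n̂/k̃⌋·k̃ satisfies Γ ≤ k. Set δ := ⌊n̂/k̃⌋, ρ := δ·k, and ν := ρ + Γ. Then there exists a family of subsets rows_1, …, rows_ν of {1, …, n̂} such that: every column index j ∈ {1, …, n̂} belongs to exactly k of the sets rows_i; |rows_i| = k̃ for each i ∈ {1, …, ρ}; and rows_i = {1, …, k} for each i ∈ {ρ+1, …, ν}. -/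
/-!
Cut the columns `[0, δ·k̃)`, `δ = ⌊n̂/k̃⌋`, into `δ` blocks of `k̃` consecutive columns, and let
the `a`-th group of `k` rows among the first `ρ = δ·k` consist of the `a`-th column block: every
such row has `k̃` elements and every such column lies in `k` rows. In the first group, row `r`
then trades the `Γ` columns `j < k` with `(j + r) mod k < Γ`, a cyclic window, for the `Γ` extra
columns `[δ·k̃, n̂)`. The extra columns now lie in the `k` rows of the first group. As the window
of row `r` contains `j` iff the window of row `j` contains `r`, each column `j < k` has lost
exactly `Γ` rows, which the `Γ` final rows `{0, …, k - 1}` give back.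
-/

open Finset

theorem Fin.card_filter_val_eq_card_filter_range (n : ℕ) (p : ℕ → Prop) [DecidablePred p] :
    #{i : Fin n | p i} = #{i ∈ range n | p i} := by
  rw [← card_map Fin.valEmbedding, ← Nat.Iio_eq_range, ← Fin.map_valEmbedding_univ,
    filter_map]
  rfl

theorem Nat.mem_Ico_mul_iff_div_eq {d c j : ℕ} (hd : 0 < d) :
    j ∈ Ico (c * d) (c * d + d) ↔ j / d = c := by
  rw [mem_Ico, Nat.div_eq_iff hd]
  omega

theorem Nat.div_mul_add_le_mul_of_lt_mul {a b c : ℕ} (d : ℕ) (h : a < c * b) :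
    a / b * d + d ≤ c * d := by
  have : a / b + 1 ≤ c := Nat.div_lt_of_lt_mul (by rwa [mul_comm])
  simpa [add_mul] using Nat.mul_le_mul_right d this

namespace PPC

def cyclicWindow (k Γ a : ℕ) : Finset ℕ := {b ∈ range k | (a + b) % k < Γ}

theorem card_cyclicWindow {k Γ : ℕ} (a : ℕ) (hΓ : Γ ≤ k) :
    #(cyclicWindow k Γ a) = Γ := by
  rcases Nat.eq_zero_or_pos k with rfl | hk
  · simp_all [cyclicWindow]
  have : NeZero k := ⟨hk.ne'⟩
  calc #(cyclicWindow k Γ a) = #{b : Fin k | (b : ℕ) < Γ} := by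
        rw [cyclicWindow, ← Fin.card_filter_val_eq_card_filter_range]
        refine card_equiv (Equiv.addLeft (Fin.ofNat k a)) fun b => ?_
        simp [Fin.val_add]
    _ = Γ := by rw [Fin.card_filter_val_lt, min_eq_right hΓ]

theorem cyclicWindow_subset_range (k Γ a : ℕ) : cyclicWindow k Γ a ⊆ range k :=
  filter_subset _ _

theorem mem_cyclicWindow_comm {k Γ a b : ℕ} (ha : a < k) (hb : b < k) :
    b ∈ cyclicWindow k Γ a ↔ a ∈ cyclicWindow k Γ b := by
  simp [cyclicWindow, ha, hb, add_comm]

def row (k kt δ Γ i : ℕ) : Finset ℕ :=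
  if δ * k ≤ i then range k
  else if i < k then (range kt \ cyclicWindow k Γ i) ∪ Ico (δ * kt) (δ * kt + Γ)
  else Ico (i / k * kt) (i / k * kt + kt)

variable {k kt δ Γ : ℕ}

theorem row_subset_range {i : ℕ} (hi : i < δ * k) :
    row k kt δ Γ i ⊆ range (δ * kt + Γ) := by
  have := Nat.div_mul_add_le_mul_of_lt_mul kt hi
  intro j hj
  rw [row, if_neg (not_le.2 hi)] at hj
  split_ifs at hj with hik
  · have : kt ≤ δ * kt := by simpa [Nat.div_eq_of_lt hik] using this
    simp only [mem_union, mem_sdiff, mem_range, mem_Ico] at hj ⊢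
    omega
  · simp only [mem_range, mem_Ico] at hj ⊢
    omega

theorem card_row (hkkt : k ≤ kt) (hΓ : Γ ≤ k) {i : ℕ} (hi : i < δ * k) :
    #(row k kt δ Γ i) = kt := by
  rw [row, if_neg (not_le.2 hi)]
  split_ifs with hik
  · have : kt ≤ δ * kt := by
      simpa [Nat.div_eq_of_lt hik] using Nat.div_mul_add_le_mul_of_lt_mul kt hi
    have hsub : cyclicWindow k Γ i ⊆ range kt :=
      (cyclicWindow_subset_range k Γ i).trans (range_subset_range.2 hkkt)
    have hdisj : Disjoint (range kt \ cyclicWindow k Γ i) (Ico (δ * kt) (δ * kt + Γ)) := by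
      rw [disjoint_left]
      intro j hj hj'
      simp only [mem_sdiff, mem_range, mem_Ico] at hj hj'
      omega
    rw [card_union_of_disjoint hdisj, card_sdiff_of_subset hsub, card_range,
      card_cyclicWindow i hΓ, Nat.card_Ico]
    omega
  · simp

theorem filter_mem_row_of_lt (hδ : 0 < δ) (hkkt : k ≤ kt) {j : ℕ} (hj : j < k) :
    {i ∈ range (δ * k + Γ) | j ∈ row k kt δ Γ i}
      = (range k \ cyclicWindow k Γ j) ∪ Ico (δ * k) (δ * k + Γ) := by
  have hkδk : k ≤ δ * k := Nat.le_mul_of_pos_left k hδ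
  have hktδkt : kt ≤ δ * kt := Nat.le_mul_of_pos_left kt hδ
  ext i
  rw [mem_filter, row]
  split_ifs with h₁ h₂
  · simp only [mem_range, mem_union, mem_sdiff, mem_Ico]
    omega
  · simp only [mem_union, mem_sdiff, mem_range, mem_Ico, mem_cyclicWindow_comm h₂ hj]
    grind
  · have : kt ≤ i / k * kt :=
      Nat.le_mul_of_pos_left kt ((Nat.one_le_div_iff (by omega)).2 (by omega))
    simp only [mem_union, mem_sdiff, mem_range, mem_Ico]
    omega

theorem filter_mem_row_of_le_of_lt (hkkt : k ≤ kt) {j : ℕ} (hkj : k ≤ j) (hj : j < δ * kt) :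
    {i ∈ range (δ * k + Γ) | j ∈ row k kt δ Γ i} = Ico (j / kt * k) (j / kt * k + k) := by
  have hkt : 0 < kt := Nat.pos_of_ne_zero (by rintro rfl; simp at hj)
  have hjδ : j / kt < δ := Nat.div_lt_of_lt_mul (by rwa [mul_comm])
  rcases Nat.eq_zero_or_pos k with rfl | hk
  · ext i
    simp [row]
  ext i
  rw [mem_filter, mem_range, Nat.mem_Ico_mul_iff_div_eq hk, row]
  split_ifs with h₁ h₂
  · have : δ ≤ i / k := (Nat.le_div_iff_mul_le hk).2 h₁
    simp only [mem_range]
    omega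
  · have hi : i / k = 0 := Nat.div_eq_of_lt h₂
    have hjkt : j / kt = 0 ↔ j < kt := Nat.div_eq_zero_iff_lt hkt
    simp only [cyclicWindow, mem_union, mem_sdiff, mem_range, mem_filter, mem_Ico]
    omega
  · rw [Nat.mem_Ico_mul_iff_div_eq hkt]
    omega

theorem filter_mem_row_of_le (hδ : 0 < δ) (hkkt : k ≤ kt) {j : ℕ} (hj₁ : δ * kt ≤ j)
    (hj₂ : j < δ * kt + Γ) :
    {i ∈ range (δ * k + Γ) | j ∈ row k kt δ Γ i} = range k := by
  have hkδk : k ≤ δ * k := Nat.le_mul_of_pos_left k hδ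
  have hktδkt : kt ≤ δ * kt := Nat.le_mul_of_pos_left kt hδ
  ext i
  rw [mem_filter, row]
  split_ifs with h₁ h₂ <;> simp only [mem_union, mem_sdiff, mem_range, mem_Ico]
  · omega
  · omega
  · have := Nat.div_mul_add_le_mul_of_lt_mul kt (not_le.1 h₁)
    omega

theorem card_filter_mem_row (hδ : 0 < δ) (hkkt : k ≤ kt) (hΓ : Γ ≤ k) {j : ℕ}
    (hj : j < δ * kt + Γ) :
    #{i ∈ range (δ * k + Γ) | j ∈ row k kt δ Γ i} = k := by
  rcases lt_or_ge j k with hjk | hkj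
  · have hdisj : Disjoint (range k \ cyclicWindow k Γ j) (Ico (δ * k) (δ * k + Γ)) := by
      rw [disjoint_left]
      intro i hi hi'
      have := Nat.le_mul_of_pos_left k hδ
      simp only [mem_sdiff, mem_range, mem_Ico] at hi hi'
      omega
    rw [filter_mem_row_of_lt hδ hkkt hjk, card_union_of_disjoint hdisj,
      card_sdiff_of_subset (cyclicWindow_subset_range k Γ j), card_range,
      card_cyclicWindow j hΓ, Nat.card_Ico]
    omega
  rcases lt_or_ge j (δ * kt) with hjδ | hjδ
  · rw [filter_mem_row_of_le_of_lt hkkt hkj hjδ, Nat.card_Ico]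
    omega
  · rw [filter_mem_row_of_le hδ hkkt hjδ hj, card_range]

theorem exists_rows (hδ : 0 < δ) (hkkt : k ≤ kt) (hΓ : Γ ≤ k) :
    ∃ rows : Fin (δ * k + Γ) → Finset (Fin (δ * kt + Γ)),
      (∀ j : Fin (δ * kt + Γ), #{i | j ∈ rows i} = k) ∧
      (∀ i : Fin (δ * k + Γ), (i : ℕ) < δ * k → #(rows i) = kt) ∧
      (∀ i : Fin (δ * k + Γ), δ * k ≤ (i : ℕ) →
        rows i = univ.filter fun j : Fin (δ * kt + Γ) => (j : ℕ) < k) := by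
  refine ⟨fun i => {j | (j : ℕ) ∈ row k kt δ Γ i}, fun j => ?_, fun i hi => ?_,
    fun i hi => ?_⟩
  · simp only [mem_filter, mem_univ, true_and]
    rw [Fin.card_filter_val_eq_card_filter_range (p := fun i => (j : ℕ) ∈ row k kt δ Γ i)]
    exact card_filter_mem_row hδ hkkt hΓ j.isLt
  · rw [Fin.card_filter_val_eq_card_filter_range (p := (· ∈ row k kt δ Γ i)),
      filter_mem_eq_inter, inter_eq_right.2 (row_subset_range hi), card_row hkkt hΓ hi]
  · simp [row, hi]

end PPC

/-- Existence of the family of row supports of a PPC systematic achievable rate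
matrix with `(κ, ν) = (k, ⌊n̂/k̃⌋·k + Γ)` where `Γ = n̂ − ⌊n̂/k̃⌋·k̃ ≤ k`:
there are subsets `rows_1, …, rows_ν` of `{1, …, n̂}` such that every column index
belongs to exactly `k` of them, the first `ρ = ⌊n̂/k̃⌋·k` of them have size `k̃`,
and the remaining ones equal `{1, …, k}`. -/
theorem ppc_systematic_matrix_exists (k kt nhat : ℕ)
    (hk : 1 ≤ k) (hkkt : k ≤ kt) (hktn : kt ≤ nhat)
    (hΓ : nhat - nhat / kt * kt ≤ k) :
    ∃ rows : Fin (nhat / kt * k + (nhat - nhat / kt * kt)) → Finset (Fin nhat),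
      (∀ j : Fin nhat, (Finset.univ.filter fun i => j ∈ rows i).card = k) ∧
      (∀ i : Fin (nhat / kt * k + (nhat - nhat / kt * kt)),
        (i : ℕ) < nhat / kt * k → (rows i).card = kt) ∧
      (∀ i : Fin (nhat / kt * k + (nhat - nhat / kt * kt)),
        nhat / kt * k ≤ (i : ℕ) →
          rows i = Finset.univ.filter fun j : Fin nhat => (j : ℕ) < k) := by
  have hδ : 0 < nhat / kt := Nat.div_pos hktn (by omega)
  have hn : nhat = nhat / kt * kt + (nhat - nhat / kt * kt) :=
    (Nat.add_sub_of_le (Nat.div_mul_le_self nhat kt)).symm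
  generalize nhat / kt = δ at hδ hn hΓ ⊢
  generalize nhat - δ * kt = Γ at hn hΓ ⊢
  subst hn
  exact PPC.exists_rows hδ hkkt hΓ
end

section
/- Fix integers n, k, g with k ≥ 1, g ≥ 1 and g(k−1)+1 < n, set k̃ = g(k−1)+1, let n̂ and ν be as defined in the context (so that k < ν), and fix a real number H ≥ 0. Let M(f,g) = C(g+f, g) − 1 and let μ : ℕ → ℕ satisfy f ≤ μ(f) for all f. Define, for f ≥ 1, R^S(f) = (k/n̂)·((ν−k)/k)·H / (1 − (k/ν)^{min(μ(f), M(f,g))} − (min(μ(f), M(f,g)) − f)·(1 − k/ν)·(k/ν)^{μ(f)−1}). Then R^S(f) converges, as f → ∞, to ((ν − k)/n̂)·H. -/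
/-!
The numerator of the rate is the constant `((ν - k) / n̂) · H`, so it suffices that the
denominator tends to `1`. Put `r = k / ν < 1` and `m f = min (μ f) (M (f, g))`; since
`f ≤ m f ≤ (g + f) ^ g`, both `r ^ m f` and `(m f - f) · r ^ (μ f - 1)` are (at most)
polynomial in `f` times a geometrically decaying factor, hence tend to `0`.
-/

open Filter Topology

theorem Nat.le_choose_add_sub_one {g : ℕ} (hg : 1 ≤ g) (f : ℕ) : f ≤ (g + f).choose g - 1 := by
  have : (f + 1).choose f ≤ (g + f).choose f := Nat.choose_le_choose f (by omega)
  rw [Nat.choose_succ_self_right, ← Nat.choose_symm_add] at this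
  omega

section

variable {r : ℝ}

theorem tendsto_add_pow_mul_pow_sub_one (hr0 : 0 < r) (hr1 : r < 1) (g : ℕ) :
    Tendsto (fun f : ℕ => ((g + f : ℕ) : ℝ) ^ g * r ^ (f - 1)) atTop (𝓝 0) := by
  have hshift : Tendsto (fun f : ℕ => ((f + g : ℕ) : ℝ) ^ g * r ^ (f + g) * (r ^ (g + 1))⁻¹)
      atTop (𝓝 0) := by
    simpa using ((tendsto_pow_const_mul_const_pow_of_lt_one g hr0.le hr1).comp
      (tendsto_add_atTop_nat g)).mul_const (r ^ (g + 1))⁻¹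
  refine hshift.congr' ?_
  filter_upwards [eventually_ge_atTop 1] with f hf
  have hpow : r ^ (f + g) = r ^ (g + 1) * r ^ (f - 1) := by
    rw [← pow_add]; congr 1; omega
  rw [hpow, add_comm f g]
  field_simp

theorem tendsto_sub_mul_pow_sub_one (hr0 : 0 < r) (hr1 : r < 1) {g : ℕ} {m μ : ℕ → ℕ}
    (hfm : ∀ f, f ≤ m f) (hmg : ∀ f, m f ≤ (g + f) ^ g) (hμ : ∀ f, f ≤ μ f) :
    Tendsto (fun f : ℕ => ((m f : ℝ) - f) * r ^ (μ f - 1)) atTop (𝓝 0) := by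
  refine squeeze_zero (fun f => ?_) (fun f => ?_) (tendsto_add_pow_mul_pow_sub_one hr0 hr1 g)
  · have : (f : ℝ) ≤ m f := by exact_mod_cast hfm f
    exact mul_nonneg (by linarith) (by positivity)
  · have hsub : (m f : ℝ) - f ≤ ((g + f : ℕ) : ℝ) ^ g := by
      have : (m f : ℝ) ≤ ((g + f : ℕ) : ℝ) ^ g := by exact_mod_cast hmg f
      linarith [(f.cast_nonneg : (0 : ℝ) ≤ f)]
    have hpow : r ^ (μ f - 1) ≤ r ^ (f - 1) :=
      pow_le_pow_of_le_one hr0.le hr1.le (by have := hμ f; omega)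
    exact mul_le_mul hsub hpow (by positivity) (by positivity)

theorem tendsto_one_sub_pow_sub_mul_pow_sub_one (hr0 : 0 < r) (hr1 : r < 1) {g : ℕ}
    {m μ : ℕ → ℕ} (hfm : ∀ f, f ≤ m f) (hmg : ∀ f, m f ≤ (g + f) ^ g) (hμ : ∀ f, f ≤ μ f) :
    Tendsto (fun f : ℕ => 1 - r ^ m f - ((m f : ℝ) - f) * (1 - r) * r ^ (μ f - 1))
      atTop (𝓝 1) := by
  have hpow : Tendsto (fun f => r ^ m f) atTop (𝓝 0) :=
    (tendsto_pow_atTop_nhds_zero_of_lt_one hr0.le hr1).comp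
      (tendsto_atTop_mono hfm tendsto_id)
  have hexcess := (tendsto_sub_mul_pow_sub_one hr0 hr1 hfm hmg hμ).mul_const (1 - r)
  simpa [mul_right_comm] using (tendsto_const_nhds (x := (1 : ℝ))).sub hpow |>.sub hexcess

end

theorem sys_ppc_rate_asymptotic_general (n k g : ℕ) (hk : 1 ≤ k) (hg : 1 ≤ g)
    (hkν : k < nuV k (g * (k - 1) + 1) n)
    (H : ℝ) (μ : ℕ → ℕ) (hμ : ∀ f, f ≤ μ f) :
    Tendsto
      (fun f : ℕ =>
        ((k : ℝ) / (nhat k (g * (k - 1) + 1) n : ℝ)) *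
            (((nuV k (g * (k - 1) + 1) n : ℝ) - (k : ℝ)) / (k : ℝ)) * H /
          (1 - ((k : ℝ) / (nuV k (g * (k - 1) + 1) n : ℝ))
                  ^ (min (μ f) ((g + f).choose g - 1))
            - ((min (μ f) ((g + f).choose g - 1) : ℝ) - (f : ℝ)) *
                (1 - (k : ℝ) / (nuV k (g * (k - 1) + 1) n : ℝ)) *
                ((k : ℝ) / (nuV k (g * (k - 1) + 1) n : ℝ)) ^ (μ f - 1)))
      atTop
      (nhds ((((nuV k (g * (k - 1) + 1) n : ℝ) - (k : ℝ)) /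
        (nhat k (g * (k - 1) + 1) n : ℝ)) * H)) := by
  set ν : ℕ := nuV k (g * (k - 1) + 1) n
  set N : ℕ := nhat k (g * (k - 1) + 1) n
  set m : ℕ → ℕ := fun f => min (μ f) ((g + f).choose g - 1)
  have hk0 : (0 : ℝ) < k := by exact_mod_cast hk
  have hν0 : (0 : ℝ) < ν := Nat.cast_pos.2 (by omega)
  have hr0 : 0 < (k : ℝ) / ν := div_pos hk0 hν0
  have hr1 : (k : ℝ) / ν < 1 := (div_lt_one hν0).2 (by exact_mod_cast hkν)
  have hD := tendsto_one_sub_pow_sub_mul_pow_sub_one hr0 hr1 (m := m)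
    (fun f => le_min (hμ f) (Nat.le_choose_add_sub_one hg f))
    (fun f => (min_le_right _ _).trans ((Nat.sub_le _ _).trans (Nat.choose_le_pow _ _))) hμ
  have hcast (f : ℕ) : ((m f : ℕ) : ℝ) = min (μ f : ℝ) ((g + f).choose g - 1) := by
    simp [m, Nat.cast_min, Nat.cast_sub (Nat.choose_pos (Nat.le_add_right g f))]
  convert (tendsto_const_nhds (x := ((ν : ℝ) - k) / N * H)).div hD one_ne_zero using 1
  · funext f
    simp only [Pi.div_apply, hcast, div_mul_div_cancel₀' hk0.ne']
    rfl
  · rw [div_one]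

/-- **Asymptotic systematic PPC rate (Corollary 2, second case form).** For an
`[n,k]` RS-coded DSS with systematic Lagrange encoding, `k̃ = g(k−1)+1 < n`
(so that `k < ν`), `M(f,g) = C(g+f,g) − 1`, and `μ(f) ≥ f` candidate polynomial
functions, the achievable systematic PPC rate
`R^S(f) = (k/n̂)((ν−k)/k) H / (1 − (k/ν)^{min(μ(f),M(f,g))}
          − (min(μ(f),M(f,g)) − f)(1 − k/ν)(k/ν)^{μ(f)−1})`
converges, as `f → ∞`, to `((ν − k)/n̂)·H`. -/
theorem sys_ppc_rate_asymptotic (n k g : ℕ) (hk : 1 ≤ k) (hg : 1 ≤ g)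
    (hn : g * (k - 1) + 1 < n) (hkν : k < nuV k (g * (k - 1) + 1) n)
    (H : ℝ) (hH : 0 ≤ H) (μ : ℕ → ℕ) (hμ : ∀ f, f ≤ μ f) :
    Tendsto
      (fun f : ℕ =>
        ((k : ℝ) / (nhat k (g * (k - 1) + 1) n : ℝ)) *
            (((nuV k (g * (k - 1) + 1) n : ℝ) - (k : ℝ)) / (k : ℝ)) * H /
          (1 - ((k : ℝ) / (nuV k (g * (k - 1) + 1) n : ℝ))
                  ^ (min (μ f) ((g + f).choose g - 1))
            - ((min (μ f) ((g + f).choose g - 1) : ℝ) - (f : ℝ)) *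
                (1 - (k : ℝ) / (nuV k (g * (k - 1) + 1) n : ℝ)) *
                ((k : ℝ) / (nuV k (g * (k - 1) + 1) n : ℝ)) ^ (μ f - 1)))
      atTop
      (nhds ((((nuV k (g * (k - 1) + 1) n : ℝ) - (k : ℝ)) /
        (nhat k (g * (k - 1) + 1) n : ℝ)) * H)) :=
  sys_ppc_rate_asymptotic_general n k g hk hg hkν H μ hμ
end
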